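/- (GHZ no-go theorem) Let n = 3 and A = B = Fin 2, and let X be a GHZ team. Then for every nonempty type C there is no hidden-variable team Y ⊆ (Fin 3 → Fin 2) × (Fin 3 → Fin 2) × C that realizes X and supports both z-independence and locality. -/
import Mathlib


/-- A hidden-variable team: a set of assignments `(a, b, c)` where `a` gives the
measurement values, `b` the outcome values and `c` the hidden-variable value. -/
abbrev HVTeam (n : ℕ) (A B C : Type) := Set ((Fin n → A) × (Fin n → B) × C)

/-- An empirical team: a set of assignments `(a, b)`. -/
abbrev EmpTeam (n : ℕ) (A B : Type) := Set ((Fin n → A) × (Fin n → B))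

/-- A hidden-variable team `Y` realizes an empirical team `X`. -/
def Realizes {n : ℕ} {A B C : Type} (Y : HVTeam n A B C) (X : EmpTeam n A B) : Prop :=
  X = {ab | ∃ c, (ab.1, ab.2, c) ∈ Y}

/-- z-independence: the hidden variable is independent of the measurements. -/
def ZIndependence {n : ℕ} {A B C : Type} (Y : HVTeam n A B C) : Prop :=
  ∀ s ∈ Y, ∀ s' ∈ Y, ∃ s'' ∈ Y, s''.2.2 = s.2.2 ∧ ∀ i, s''.1 i = s'.1 i

/-- Locality. -/
def Locality {n : ℕ} {A B C : Type} (Y : HVTeam n A B C) : Prop :=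
  ∀ f : Fin n → ((Fin n → A) × (Fin n → B) × C), (∀ i, f i ∈ Y) →
    (∃ s ∈ Y, ∀ i, s.1 i = (f i).1 i ∧ s.2.2 = (f i).2.2) →
    ∃ s' ∈ Y, ∀ i, s'.1 i = (f i).1 i ∧ s'.2.1 i = (f i).2.1 i ∧ s'.2.2 = (f i).2.2

def GHZ_P : Set (Fin 3 → Fin 2) := {![0, 1, 1], ![1, 0, 1], ![1, 1, 0]}

def GHZ_Q : Set (Fin 3 → Fin 2) := {![0, 0, 0], ![0, 1, 1], ![1, 0, 1], ![1, 1, 0]}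

def GHZ_R : Set (Fin 3 → Fin 2) := {![0, 0, 1], ![0, 1, 0], ![1, 0, 0], ![1, 1, 1]}

/-- A GHZ team. -/
def IsGHZTeam (X : EmpTeam 3 (Fin 2) (Fin 2)) : Prop :=
  ({b | ∃ s ∈ X, s.1 ∈ GHZ_P ∧ s.2 = b} = GHZ_Q ∧
    GHZ_P ⊆ {a | ∃ s ∈ X, s.2 ∈ GHZ_Q ∧ s.1 = a}) ∧
  {b | ∃ s ∈ X, s.1 = ![0, 0, 0] ∧ s.2 = b} = GHZ_R

lemma memQ_parity (b : Fin 3 → Fin 2) (h : b ∈ GHZ_Q) :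
    ((b 0).val + (b 1).val + (b 2).val) % 2 = 0 := by
  simp only [GHZ_Q, Set.mem_insert_iff, Set.mem_singleton_iff] at h
  rcases h with h|h|h|h <;> subst h <;> decide

lemma memR_parity (b : Fin 3 → Fin 2) (h : b ∈ GHZ_R) :
    ((b 0).val + (b 1).val + (b 2).val) % 2 = 1 := by
  simp only [GHZ_R, Set.mem_insert_iff, Set.mem_singleton_iff] at h
  rcases h with h|h|h|h <;> subst h <;> decide

/-- GHZ no-go theorem: no GHZ team is realized by a hidden-variable team
supporting z-independence and locality. -/
theorem ghz_no_go (X : EmpTeam 3 (Fin 2) (Fin 2)) (hX : IsGHZTeam X)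
    (C : Type) [Nonempty C] :
    ¬ ∃ Y : HVTeam 3 (Fin 2) (Fin 2) C,
        Realizes Y X ∧ ZIndependence Y ∧ Locality Y := by
  rintro ⟨Y, hreal, hz, hloc⟩
  obtain ⟨⟨hQ, hP⟩, hR⟩ := hX
  unfold Realizes at hreal
  -- a team member with measurement context 000
  have h001 : (![0,0,1] : Fin 3 → Fin 2) ∈ GHZ_R := by simp [GHZ_R]
  rw [← hR] at h001
  obtain ⟨s0, hs0X, hs0a, _⟩ := h001
  rw [hreal] at hs0X
  obtain ⟨c, hu0⟩ := hs0X
  set u0 : (Fin 3 → Fin 2) × (Fin 3 → Fin 2) × C := (s0.1, s0.2, c) with hu0def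
  have hu0x : ∀ i, u0.1 i = (![0,0,0] : Fin 3 → Fin 2) i := fun i => by
    rw [hu0def]; exact congrFun hs0a i
  have hu0z : u0.2.2 = c := rfl
  -- team members for each context in P, at hidden value c
  have getp : ∀ p ∈ GHZ_P, ∃ u ∈ Y, (∀ i, u.1 i = p i) ∧ u.2.2 = c := by
    intro p hp
    obtain ⟨sp, hspX, _, hspa⟩ := hP hp
    rw [hreal] at hspX
    obtain ⟨cp, hcp⟩ := hspX
    obtain ⟨u, huY, huz, hux⟩ := hz u0 hu0 (sp.1, sp.2, cp) hcp
    exact ⟨u, huY, fun i => by rw [hux i, congrFun hspa i], huz⟩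
  obtain ⟨u1, hu1Y, hu1x, hu1z⟩ := getp ![0,1,1] (by simp [GHZ_P])
  obtain ⟨u2, hu2Y, hu2x, hu2z⟩ := getp ![1,0,1] (by simp [GHZ_P])
  obtain ⟨u3, hu3Y, hu3x, hu3z⟩ := getp ![1,1,0] (by simp [GHZ_P])
  -- outcomes of team members are constrained by X
  have memX : ∀ u ∈ Y, (u.1, u.2.1) ∈ X := by
    intro u huY
    rw [hreal]
    exact ⟨u.2.2, huY⟩
  have outQ : ∀ u ∈ Y, u.1 ∈ GHZ_P → u.2.1 ∈ GHZ_Q := by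
    intro u huY hp
    rw [← hQ]
    exact ⟨(u.1, u.2.1), memX u huY, hp, rfl⟩
  have outR : ∀ u ∈ Y, (∀ i, u.1 i = (![0,0,0] : Fin 3 → Fin 2) i) → u.2.1 ∈ GHZ_R := by
    intro u huY h0
    rw [← hR]
    exact ⟨(u.1, u.2.1), memX u huY, funext h0, rfl⟩
  -- mixing via locality
  have mix : ∀ a b c' : (Fin 3 → Fin 2) × (Fin 3 → Fin 2) × C, a ∈ Y → b ∈ Y → c' ∈ Y →
      a.2.2 = c → b.2.2 = c → c'.2.2 = c →
      (∃ w ∈ Y, w.2.2 = c ∧ w.1 0 = a.1 0 ∧ w.1 1 = b.1 1 ∧ w.1 2 = c'.1 2) →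
      ∃ s' ∈ Y, s'.1 0 = a.1 0 ∧ s'.1 1 = b.1 1 ∧ s'.1 2 = c'.1 2 ∧
        s'.2.1 0 = a.2.1 0 ∧ s'.2.1 1 = b.2.1 1 ∧ s'.2.1 2 = c'.2.1 2 := by
    rintro a b c' ha hb hc haz hbz hcz ⟨w, hw, hwz, hw0, hw1, hw2⟩
    obtain ⟨s', hs'Y, hs'⟩ := hloc ![a,b,c'] (by
        intro i; fin_cases i <;> simpa)
      ⟨w, hw, by
        intro i
        fin_cases i
        · exact ⟨hw0, hwz.trans haz.symm⟩
        · exact ⟨hw1, hwz.trans hbz.symm⟩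
        · exact ⟨hw2, hwz.trans hcz.symm⟩⟩
    refine ⟨s', hs'Y, ?_, ?_, ?_, ?_, ?_, ?_⟩
    · simpa using (hs' 0).1
    · simpa using (hs' 1).1
    · simpa using (hs' 2).1
    · simpa using (hs' 0).2.1
    · simpa using (hs' 1).2.1
    · simpa using (hs' 2).2.1
  -- Fact A: context 000, from u0 itself
  have hA := memR_parity _ (outR u0 hu0 hu0x)
  -- Fact B: context 011 from (u0, u1, u1), witness u1
  obtain ⟨v1, hv1Y, hv1x0, hv1x1, hv1x2, hv1b0, hv1b1, hv1b2⟩ :=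
    mix u0 u1 u1 hu0 hu1Y hu1Y hu0z hu1z hu1z
      ⟨u1, hu1Y, hu1z, by rw [hu1x 0, hu0x 0]; decide, rfl, rfl⟩
  have hv1P : v1.1 ∈ GHZ_P := by
    have : v1.1 = ![0,1,1] := by
      funext i
      fin_cases i
      · show v1.1 0 = _; rw [hv1x0, hu0x 0]; decide
      · show v1.1 1 = _; rw [hv1x1, hu1x 1]; decide
      · show v1.1 2 = _; rw [hv1x2, hu1x 2]; decide
    rw [this]; simp [GHZ_P]
  have hB := memQ_parity _ (outQ v1 hv1Y hv1P)
  -- Fact C: context 101 from (u2, u0, u1), witness u2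
  obtain ⟨v2, hv2Y, hv2x0, hv2x1, hv2x2, hv2b0, hv2b1, hv2b2⟩ :=
    mix u2 u0 u1 hu2Y hu0 hu1Y hu2z hu0z hu1z
      ⟨u2, hu2Y, hu2z, rfl, by rw [hu2x 1, hu0x 1]; decide, by rw [hu2x 2, hu1x 2]; decide⟩
  have hv2P : v2.1 ∈ GHZ_P := by
    have : v2.1 = ![1,0,1] := by
      funext i
      fin_cases i
      · show v2.1 0 = _; rw [hv2x0, hu2x 0]; decide
      · show v2.1 1 = _; rw [hv2x1, hu0x 1]; decide
      · show v2.1 2 = _; rw [hv2x2, hu1x 2]; decide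
    rw [this]; simp [GHZ_P]
  have hC := memQ_parity _ (outQ v2 hv2Y hv2P)
  -- Fact D: context 110 from (u2, u1, u0), witness u3
  obtain ⟨v3, hv3Y, hv3x0, hv3x1, hv3x2, hv3b0, hv3b1, hv3b2⟩ :=
    mix u2 u1 u0 hu2Y hu1Y hu0 hu2z hu1z hu0z
      ⟨u3, hu3Y, hu3z, by rw [hu3x 0, hu2x 0]; decide, by rw [hu3x 1, hu1x 1]; decide,
        by rw [hu3x 2, hu0x 2]; decide⟩
  have hv3P : v3.1 ∈ GHZ_P := by
    have : v3.1 = ![1,1,0] := by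
      funext i
      fin_cases i
      · show v3.1 0 = _; rw [hv3x0, hu2x 0]; decide
      · show v3.1 1 = _; rw [hv3x1, hu1x 1]; decide
      · show v3.1 2 = _; rw [hv3x2, hu0x 2]; decide
    rw [this]; simp [GHZ_P]
  have hD := memQ_parity _ (outQ v3 hv3Y hv3P)
  -- combine
  rw [hv1b0, hv1b1, hv1b2] at hB
  rw [hv2b0, hv2b1, hv2b2] at hC
  rw [hv3b0, hv3b1, hv3b2] at hD
  omega
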